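/- In Sette's three-valued semantics for P1, for distinct atomic formulas A and B, the converse (¬A ∨ ¬B) → ¬(A ∧ B) is NOT valid: the assignment v(A) = 1, v(B) = * refutes it. -/
import Mathlib


inductive TV | one | star | zero
deriving DecidableEq

def tvNeg : TV → TV
  | .one => .zero | .star => .one | .zero => .one

def tvSNeg : TV → TV
  | .one => .zero | .star => .zero | .zero => .one

def tvInc : TV → TV
  | .one => .one | .star => .zero | .zero => .one

def tvAnd (x y : TV) : TV := if x ≠ TV.zero ∧ y ≠ TV.zero then .one else .zero
def tvOr (x y : TV) : TV := if x = TV.zero ∧ y = TV.zero then .zero else .one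
def tvImp (x y : TV) : TV := if x ≠ TV.zero ∧ y = TV.zero then .zero else .one

inductive Fm
  | atom (n : ℕ)
  | neg (X : Fm)
  | sneg (X : Fm)
  | inc (n : ℕ)
  | conj (X Y : Fm)
  | disj (X Y : Fm)
  | imp (X Y : Fm)

def eval (v : ℕ → TV) : Fm → TV
  | .atom n => v n
  | .neg X => tvNeg (eval v X)
  | .sneg X => tvSNeg (eval v X)
  | .inc n => tvInc (v n)
  | .conj X Y => tvAnd (eval v X) (eval v Y)
  | .disj X Y => tvOr (eval v X) (eval v Y)
  | .imp X Y => tvImp (eval v X) (eval v Y)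

def valid (X : Fm) : Prop := ∀ v : ℕ → TV, eval v X ≠ TV.zero

theorem stmt7 (A B : ℕ) (h : A ≠ B) :
    (∀ v : ℕ → TV, v A = TV.one → v B = TV.star →
      eval v (Fm.imp (Fm.disj (Fm.neg (Fm.atom A)) (Fm.neg (Fm.atom B)))
        (Fm.neg (Fm.conj (Fm.atom A) (Fm.atom B)))) = TV.zero) ∧
    ¬ valid (Fm.imp (Fm.disj (Fm.neg (Fm.atom A)) (Fm.neg (Fm.atom B)))
        (Fm.neg (Fm.conj (Fm.atom A) (Fm.atom B)))) := by
  constructor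
  · intro v hA hB
    simp [eval, hA, hB, tvNeg, tvAnd, tvOr, tvImp]
  · intro hv
    apply hv (fun n => if n = A then TV.one else if n = B then TV.star else TV.zero)
    simp [eval, h, Ne.symm h, tvNeg, tvAnd, tvOr, tvImp]
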